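/- arXiv:1810.04517 — 6 statements merged into one kernel-verified Lean document; each statement's English description precedes it below -/
import Mathlib

section
/- Let A be an m×n real matrix and let x satisfy Ax = 0 with x ∈ [0,1]ⁿ. Let y ∈ ℝⁿ and v = Q_A y be the projection of y onto the row space of A. Then for every index j with v_j ≠ 0, we have x_j ≤ (1ᵀ [v / (−v_j)]⁺), where for a vector w, w⁺ denotes the componentwise maximum of w and 0. -/
/-!
Since `x ∈ ker A` and `v ∈ (ker A)ᗮ`, we have `∑ xᵢ vᵢ = 0`. Dividing by `-v_j` turns the `j`-th
term into `-x_j`, so `x_j = ∑_{i ≠ j} xᵢ (vᵢ / -v_j)`, and each term is at most `[vᵢ / -v_j]⁺`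
because `xᵢ ∈ [0, 1]`.
-/

open Finset

theorem mul_le_max_zero_of_mem_unitInterval {t c : ℝ} (ht₀ : 0 ≤ t) (ht₁ : t ≤ 1) :
    t * c ≤ max c 0 := by
  rcases le_total 0 c with hc | hc
  · exact le_max_of_le_left (by nlinarith)
  · exact le_max_of_le_right (mul_nonpos_of_nonneg_of_nonpos ht₀ hc)

theorem le_sum_max_div_neg_of_sum_mul_eq_zero {ι : Type*} [Fintype ι] [DecidableEq ι]
    {x v : ι → ℝ} (hx : ∀ i, 0 ≤ x i ∧ x i ≤ 1) (hxv : ∑ i, x i * v i = 0)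
    {j : ι} (hvj : v j ≠ 0) : x j ≤ ∑ i, max (v i / -v j) 0 := by
  have hw : ∑ i, x i * (v i / -v j) = 0 := by
    simp only [← mul_div_assoc, ← sum_div, hxv, zero_div]
  calc x j = ∑ i, (x i * (v i / -v j) + if i = j then x j else 0) := by
        simp [sum_add_distrib, hw]
    _ ≤ ∑ i, max (v i / -v j) 0 := by
        refine sum_le_sum fun i _ => ?_
        by_cases hij : i = j
        · subst hij
          simp [div_neg, div_self hvj]
        · simpa [hij] using mul_le_max_zero_of_mem_unitInterval (hx i).1 (hx i).2

/-- Coordinate upper bound for feasible solutions of `Ax = 0, x ∈ [0,1]ⁿ`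
derived from the row-space projection `v = Q_A y`. -/
theorem stmt_1 (m n : ℕ) (A : Matrix (Fin m) (Fin n) ℝ)
    (x : EuclideanSpace ℝ (Fin n))
    (hAx : Matrix.toEuclideanLin A x = 0)
    (hx : ∀ i, 0 ≤ x i ∧ x i ≤ 1)
    (R : Submodule ℝ (EuclideanSpace ℝ (Fin n)))
    (hR : R = (LinearMap.ker (Matrix.toEuclideanLin A))ᗮ)
    (y v : EuclideanSpace ℝ (Fin n))
    (hv : v = (R.orthogonalProjectionOnto y : EuclideanSpace ℝ (Fin n))) :
    ∀ j, v j ≠ 0 → x j ≤ ∑ i, max (v i / (-(v j))) 0 := by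
  intro j hvj
  have hvR : v ∈ (LinearMap.ker (Matrix.toEuclideanLin A))ᗮ :=
    hR ▸ hv ▸ (R.orthogonalProjectionOnto y).2
  have hxv : inner ℝ x v = 0 := Submodule.inner_right_of_mem_orthogonal hAx hvR
  rw [PiLp.inner_apply] at hxv
  exact le_sum_max_div_neg_of_sum_mul_eq_zero hx (by simpa [mul_comm] using hxv) hvj
end

section
/- Let P be an orthogonal projection matrix on ℝⁿ, let x ∈ (0,1]ⁿ satisfy Px = 0 (i.e., x lies in the range of I − P), and let z = P y for some y ∈ ℝⁿ. Then for every index j with z_j ≠ 0, x_j ≤ 1ᵀ [z / (−z_j)]⁺. -/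
open Matrix Finset

/-!
Since `x` lies in the row space and `z` in the null space of the symmetric projection `P`,
`∑ xᵢ zᵢ = 0`. Dividing by `-z_j` gives weights `wᵢ = zᵢ / (-z_j)` with `w_j = -1`, so
`x_j = ∑_{i ≠ j} xᵢ wᵢ`, and each term is at most `[wᵢ]⁺` because `0 ≤ xᵢ ≤ 1`.
-/

theorem Matrix.dotProduct_mulVec_eq_zero_of_isSymm {ι R : Type*} [Fintype ι] [CommSemiring R]
    {P : Matrix ι ι R} (hP : P.IsSymm) {x : ι → R} (hPx : P *ᵥ x = 0) (y : ι → R) :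
    x ⬝ᵥ (P *ᵥ y) = 0 := by
  rw [dotProduct_mulVec, ← hP.eq, vecMul_transpose, hPx, zero_dotProduct]

theorem mul_le_max_zero_of_mem_Icc {K : Type*} [Field K] [LinearOrder K] [IsStrictOrderedRing K]
    {a : K} (ha₀ : 0 ≤ a) (ha₁ : a ≤ 1) (t : K) : a * t ≤ max t 0 := by
  rcases le_total 0 t with ht | ht
  · exact (mul_le_of_le_one_left ht ha₁).trans (le_max_left _ _)
  · exact (mul_nonpos_of_nonneg_of_nonpos ha₀ ht).trans (le_max_right _ _)

theorem le_sum_max_zero_of_dotProduct_eq_zero {ι K : Type*} [Fintype ι] [DecidableEq ι]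
    [Field K] [LinearOrder K] [IsStrictOrderedRing K] {x w : ι → K}
    (hx : ∀ i, 0 ≤ x i ∧ x i ≤ 1) (hxw : x ⬝ᵥ w = 0) {j : ι} (hwj : w j = -1) :
    x j ≤ ∑ i, max (w i) 0 := by
  have hsplit : x j * w j + ∑ i ∈ univ.erase j, x i * w i = 0 :=
    (add_sum_erase univ (fun i => x i * w i) (mem_univ j)).trans hxw
  rw [hwj] at hsplit
  calc x j = ∑ i ∈ univ.erase j, x i * w i := by linarith
    _ ≤ ∑ i ∈ univ.erase j, max (w i) 0 :=
        sum_le_sum fun i _ => mul_le_max_zero_of_mem_Icc (hx i).1 (hx i).2 (w i)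
    _ ≤ ∑ i, max (w i) 0 :=
        sum_le_sum_of_subset_of_nonneg (erase_subset _ _) fun i _ _ => le_max_right _ _

theorem le_sum_max_div_neg_of_dotProduct_eq_zero {ι K : Type*} [Fintype ι] [DecidableEq ι]
    [Field K] [LinearOrder K] [IsStrictOrderedRing K] {x z : ι → K}
    (hx : ∀ i, 0 ≤ x i ∧ x i ≤ 1) (hxz : x ⬝ᵥ z = 0) {j : ι} (hzj : z j ≠ 0) :
    x j ≤ ∑ i, max (z i / -z j) 0 := by
  refine le_sum_max_zero_of_dotProduct_eq_zero (w := fun i => z i / -z j) hx ?_ ?_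
  · calc x ⬝ᵥ (fun i => z i / -z j) = (x ⬝ᵥ z) / -z j := by
          simp only [dotProduct, mul_div_assoc', sum_div]
      _ = 0 := by rw [hxz, zero_div]
  · simp [div_neg, div_self hzj]

theorem stmt_2_general (n : ℕ) (P : Matrix (Fin n) (Fin n) ℝ)
    (hPsymm : Pᵀ = P)
    (x : Fin n → ℝ)
    (hPx : P.mulVec x = 0)
    (hx : ∀ i, 0 < x i ∧ x i ≤ 1)
    (y z : Fin n → ℝ)
    (hz : z = P.mulVec y) :
    ∀ j, z j ≠ 0 → x j ≤ ∑ i, max (z i / (-(z j))) 0 := by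
  intro j hzj
  have hxz : x ⬝ᵥ z = 0 := hz ▸ dotProduct_mulVec_eq_zero_of_isSymm hPsymm hPx y
  exact le_sum_max_div_neg_of_dotProduct_eq_zero (fun i => ⟨(hx i).1.le, (hx i).2⟩) hxz hzj

/-- Dual cut bound: if `P` is an orthogonal projection matrix, `x ∈ (0,1]ⁿ`
with `Px = 0`, and `z = Py`, then every nonzero coordinate `z_j` yields the
bound `x_j ≤ 1ᵀ[z/(-z_j)]⁺`. -/
theorem stmt_2 (n : ℕ) (P : Matrix (Fin n) (Fin n) ℝ)
    (hPsymm : Pᵀ = P) (hPidem : P * P = P)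
    (x : Fin n → ℝ)
    (hPx : P.mulVec x = 0)
    (hx : ∀ i, 0 < x i ∧ x i ≤ 1)
    (y z : Fin n → ℝ)
    (hz : z = P.mulVec y) :
    ∀ j, z j ≠ 0 → x j ≤ ∑ i, max (z i / (-(z j))) 0 :=
  stmt_2_general n P hPsymm x hPx hx y z hz
end

section
/- Let z, x ∈ ℝⁿ with ⟨x, z⟩ = 0 and 0 ≤ x_i ≤ 1 for all i. If z_j < 0 then x_j ≤ (1ᵀ z⁺)/(−z_j), and if z_j > 0 then x_j ≤ (−1ᵀ z⁻)/z_j, where z⁻ := min(z, 0) componentwise. -/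
/-!
Split `z = z⁺ + z⁻`. Orthogonality gives `⟨x, z⁺⟩ = -⟨x, z⁻⟩`. If `z_j < 0`, the term `-x_j z_j`
is one of the nonnegative summands of `-⟨x, z⁻⟩` (as `x ≥ 0`), while `⟨x, z⁺⟩ ≤ 1ᵀ z⁺` (as `x ≤ 1`).
The case `z_j > 0` is the same bound for `-z`, since `(-z)⁺ = -z⁻`.
-/

open Finset

section

variable {ι R : Type*} [Fintype ι] [Ring R] [LinearOrder R] {x z : ι → R}

theorem sum_mul_max_zero_eq_neg_sum_mul_min_zero (horth : ∑ i, x i * z i = 0) :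
    ∑ i, x i * max (z i) 0 = -∑ i, x i * min (z i) 0 := by
  rw [eq_neg_iff_add_eq_zero, ← sum_add_distrib]
  simp only [← mul_add, max_add_min, add_zero, horth]

theorem mul_neg_le_sum_max_zero [IsStrictOrderedRing R] (horth : ∑ i, x i * z i = 0)
    (hx : ∀ i, x i ∈ Set.Icc 0 1) {j : ι} (hj : z j < 0) : x j * -z j ≤ ∑ i, max (z i) 0 :=
  calc x j * -z j = -(x j * min (z j) 0) := by rw [min_eq_left hj.le, mul_neg]
    _ ≤ ∑ i, -(x i * min (z i) 0) :=
      single_le_sum (fun i _ => neg_nonneg.mpr <|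
        mul_nonpos_of_nonneg_of_nonpos (hx i).1 (min_le_right _ _)) (mem_univ j)
    _ = ∑ i, x i * max (z i) 0 := by
      rw [sum_neg_distrib, sum_mul_max_zero_eq_neg_sum_mul_min_zero horth]
    _ ≤ ∑ i, max (z i) 0 :=
      sum_le_sum fun i _ => mul_le_of_le_one_left (le_max_right _ _) (hx i).2

theorem mul_le_neg_sum_min_zero [IsStrictOrderedRing R] (horth : ∑ i, x i * z i = 0)
    (hx : ∀ i, x i ∈ Set.Icc 0 1) {j : ι} (hj : 0 < z j) : x j * z j ≤ -∑ i, min (z i) 0 := by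
  have horth' : ∑ i, x i * -z i = 0 := by simp only [mul_neg, sum_neg_distrib, horth, neg_zero]
  have hmax (i : ι) : max (-z i) 0 = -min (z i) 0 := by rw [← max_neg_neg, neg_zero]
  simpa only [neg_neg, hmax, sum_neg_distrib] using
    mul_neg_le_sum_max_zero horth' hx (neg_lt_zero.mpr hj)

end

/-- Core orthogonality-based coordinate bound: if `⟨x, z⟩ = 0` and
`0 ≤ x ≤ 1` componentwise, then `z_j < 0` implies `x_j ≤ (1ᵀ z⁺)/(-z_j)` and
`z_j > 0` implies `x_j ≤ (-1ᵀ z⁻)/z_j`. -/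
theorem stmt_3 (n : ℕ) (z x : Fin n → ℝ)
    (horth : ∑ i, x i * z i = 0)
    (hx : ∀ i, 0 ≤ x i ∧ x i ≤ 1) (j : Fin n) :
    (z j < 0 → x j ≤ (∑ i, max (z i) 0) / (-(z j))) ∧
    (0 < z j → x j ≤ (-(∑ i, min (z i) 0)) / z j) :=
  ⟨fun hj => (le_div_iff₀ (neg_pos.mpr hj)).mpr (mul_neg_le_sum_max_zero horth hx hj),
    fun hj => (le_div_iff₀ hj).mpr (mul_le_neg_sum_min_zero horth hx hj)⟩
end

section
/- Let A be an m×n real matrix. Exactly one of the following holds: (1) there exists x ∈ ℝⁿ with Ax = 0, x ≥ 0, x ≠ 0; or (2) there exists u ∈ ℝᵐ with Aᵀu > 0 (all coordinates strictly positive). -/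
/-!
If both systems were solvable, `0 = u ⬝ᵥ A x = (Aᵀ u) ⬝ᵥ x > 0`. If the first one is not, then `0`
does not lie in the image under `A` of the standard simplex, a compact convex set; a functional
strictly separating `0` from it is `y ↦ u ⬝ᵥ y`, and its values at the columns `A eⱼ` are the
coordinates of `Aᵀ u`.
-/

open Matrix

namespace Matrix

variable {ι κ : Type*} [Fintype ι] [Fintype κ]

theorem dotProduct_pos_of_pos_of_nonneg {R : Type*} [Semiring R] [PartialOrder R]
    [IsStrictOrderedRing R] {y x : ι → R} (hy : ∀ j, 0 < y j) (hx : ∀ j, 0 ≤ x j)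
    (hx0 : x ≠ 0) : 0 < y ⬝ᵥ x := by
  obtain ⟨j, hj⟩ := Function.ne_iff.mp hx0
  refine Finset.sum_pos' (fun k _ => mul_nonneg (hy k).le (hx k)) ⟨j, Finset.mem_univ j, ?_⟩
  exact mul_pos (hy j) ((hx j).lt_of_ne' hj)

theorem not_forall_pos_transpose_mulVec {R : Type*} [CommSemiring R] [PartialOrder R]
    [IsStrictOrderedRing R] {A : Matrix κ ι R} {x : ι → R} (hAx : A *ᵥ x = 0)
    (hx : ∀ j, 0 ≤ x j) (hx0 : x ≠ 0) (u : κ → R) : ¬ ∀ j, 0 < (Aᵀ *ᵥ u) j := fun hu => by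
  have hpos := dotProduct_pos_of_pos_of_nonneg hu hx hx0
  rw [mulVec_transpose, ← dotProduct_mulVec, hAx, dotProduct_zero] at hpos
  exact hpos.false

theorem exists_forall_pos_transpose_mulVec {A : Matrix κ ι ℝ}
    (hA : ∀ x : ι → ℝ, A *ᵥ x = 0 → (∀ j, 0 ≤ x j) → x = 0) :
    ∃ u : κ → ℝ, ∀ j, 0 < (Aᵀ *ᵥ u) j := by
  classical
  set S := A.mulVecLin '' stdSimplex ℝ ι
  have hS_convex : Convex ℝ S := (convex_stdSimplex ℝ ι).linear_image _
  have hS_closed : IsClosed S :=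
    ((isCompact_stdSimplex ℝ ι).image A.mulVecLin.continuous_of_finiteDimensional).isClosed
  have h0 : (0 : κ → ℝ) ∉ S := by
    rintro ⟨x, ⟨hx, hx1⟩, hAx⟩
    simp [hA x hAx hx] at hx1
  obtain ⟨f, t, hf0, hfS⟩ := geometric_hahn_banach_point_closed hS_convex hS_closed h0
  refine ⟨(dotProductEquiv ℝ κ).symm f.toLinearMap, fun j => ?_⟩
  have hcol : A *ᵥ Pi.single j 1 ∈ S := ⟨_, single_mem_stdSimplex ℝ j, rfl⟩
  have hf : f (A *ᵥ Pi.single j 1) = (Aᵀ *ᵥ (dotProductEquiv ℝ κ).symm f.toLinearMap) j := by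
    rw [mulVec_transpose, ← dotProduct_single_one (_ ᵥ* A), ← dotProduct_mulVec]
    exact (LinearMap.congr_fun ((dotProductEquiv ℝ κ).apply_symm_apply f.toLinearMap) _).symm
  rw [← hf]
  linarith [hfS _ hcol, map_zero f]

end Matrix

/-- Gordan's theorem: exactly one of the systems `Ax = 0, x ≥ 0, x ≠ 0` and
`Aᵀu > 0` is feasible. -/
theorem stmt_8 (m n : ℕ) (A : Matrix (Fin m) (Fin n) ℝ) :
    Xor' (∃ x : Fin n → ℝ, A.mulVec x = 0 ∧ (∀ i, 0 ≤ x i) ∧ x ≠ 0)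
         (∃ u : Fin m → ℝ, ∀ j, 0 < Aᵀ.mulVec u j) := by
  by_cases hP : ∃ x : Fin n → ℝ, A.mulVec x = 0 ∧ (∀ i, 0 ≤ x i) ∧ x ≠ 0
  · obtain ⟨x, hAx, hx, hx0⟩ := hP
    exact Or.inl ⟨⟨x, hAx, hx, hx0⟩,
      fun ⟨u, hu⟩ => not_forall_pos_transpose_mulVec hAx hx hx0 u hu⟩
  · push Not at hP
    exact Or.inr ⟨exists_forall_pos_transpose_mulVec hP,
      fun ⟨x, hAx, hx, hx0⟩ => hx0 (hP x hAx hx)⟩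
end

section
/- Let A be an m×n real matrix. The system Aᵀu > 0 (u ∈ ℝᵐ) is feasible if and only if there exists x ∈ (0,1]ⁿ with P_A x = 0, where P_A is the orthogonal projection onto the null space of A. -/
/-!
`P_A x = 0` says `x ∈ (ker A)ᗮ = range Aᵀ`, so the right-hand side asks for a strictly
positive vector `Aᵀu` with entries at most `1`; any strictly positive `Aᵀu` can be scaled
into `(0,1]ⁿ` by a positive factor, and the scaled vector is still of the form `Aᵀu'`.
-/

open Matrix

theorem Matrix.orthogonal_ker_toEuclideanLin {𝕜 : Type*} [RCLike 𝕜] {m n : Type*}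
    [Fintype m] [Fintype n] [DecidableEq m] [DecidableEq n] (A : Matrix m n 𝕜) :
    (LinearMap.ker (toEuclideanLin A))ᗮ = LinearMap.range (toEuclideanLin Aᴴ) := by
  rw [LinearMap.orthogonal_ker, toEuclideanLin_conjTranspose_eq_adjoint]

theorem Matrix.orthogonalProjectionOnto_ker_toEuclideanLin_eq_zero_iff {m n : Type*}
    [Fintype m] [Fintype n] [DecidableEq m] [DecidableEq n] (A : Matrix m n ℝ)
    (x : EuclideanSpace ℝ n) :
    (LinearMap.ker (toEuclideanLin A)).orthogonalProjectionOnto x = 0 ↔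
      ∃ u : m → ℝ, Aᵀ *ᵥ u = x.ofLp := by
  rw [Submodule.orthogonalProjectionOnto_eq_zero_iff, orthogonal_ker_toEuclideanLin,
    conjTranspose_eq_transpose_of_trivial]
  constructor
  · rintro ⟨u, rfl⟩
    exact ⟨u.ofLp, rfl⟩
  · rintro ⟨u, hu⟩
    exact ⟨WithLp.toLp 2 u, by ext i; exact congrFun hu i⟩

theorem exists_pos_mul_le_one_of_pos {ι : Type*} [Fintype ι] (y : ι → ℝ) (hy : ∀ i, 0 < y i) :
    ∃ c : ℝ, 0 < c ∧ ∀ i, c * y i ≤ 1 := by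
  have hsum : 0 ≤ ∑ j, y j := Finset.sum_nonneg fun j _ ↦ (hy j).le
  refine ⟨(1 + ∑ j, y j)⁻¹, by positivity, fun i ↦ ?_⟩
  rw [inv_mul_le_one₀ (by positivity)]
  linarith [Finset.single_le_sum (fun j _ ↦ (hy j).le) (Finset.mem_univ i)]

/-- Dual feasibility via the null-space projection: `Aᵀu > 0` is feasible iff
there exists `x ∈ (0,1]ⁿ` with `P_A x = 0`, where `P_A` is the orthogonal
projection onto the null space of `A`. -/
theorem stmt_10 (m n : ℕ) (A : Matrix (Fin m) (Fin n) ℝ)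
    (N : Submodule ℝ (EuclideanSpace ℝ (Fin n)))
    (hN : N = LinearMap.ker (Matrix.toEuclideanLin A)) :
    (∃ u : Fin m → ℝ, ∀ j, 0 < Aᵀ.mulVec u j) ↔
    (∃ x : EuclideanSpace ℝ (Fin n), (∀ i, 0 < x i ∧ x i ≤ 1) ∧
      N.orthogonalProjectionOnto x = 0) := by
  subst hN
  simp only [orthogonalProjectionOnto_ker_toEuclideanLin_eq_zero_iff]
  constructor
  · rintro ⟨u, hu⟩
    obtain ⟨c, hc, hle⟩ := exists_pos_mul_le_one_of_pos _ hu
    refine ⟨WithLp.toLp 2 (c • Aᵀ *ᵥ u), fun i ↦ ⟨mul_pos hc (hu i), hle i⟩, c • u, ?_⟩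
    rw [mulVec_smul]
  · rintro ⟨x, hx, u, hu⟩
    exact ⟨u, fun j ↦ hu ▸ (hx j).1⟩
end

section
/- Let Q be an n×n orthogonal projection matrix, y ∈ ℝⁿ with y_i ≥ 1/n for all i, v = Qy, z = y − v, and suppose z is not strictly positive. Let K = {k : v_k ≤ 0}, q_K = Q(Σ_{k∈K} e_k), and suppose ⟨q_K/‖q_K‖, v⟩ > −1/(2n^{3/2}) (with q_K ≠ 0). Then there exists an index j with v_j ≥ 1/n such that (−Σ_i min(v_i,0))/v_j ≤ 1/2. -/
open Matrix

/-! Since `Q` is a symmetric idempotent fixing `v`, `⟨q_K, v⟩ = ⟨𝟙_K, Q v⟩ = Σ_{k ∈ K} v_k`, which is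
the total negative mass `Σ_i min(v_i, 0)`, and `‖q_K‖ ≤ ‖𝟙_K‖ ≤ √n`. The stall condition therefore
gives `-Σ_i min(v_i, 0) < 1/(2n)`. Any `j` with `z_j ≤ 0` has `v_j ≥ y_j ≥ 1/n`, so the ratio is at
most `1/2`. -/

namespace Matrix

variable {ι R : Type*} [Fintype ι] [CommRing R] {Q : Matrix ι ι R}

lemma IsSymm.mulVec_dotProduct (hQ : Q.IsSymm) (u w : ι → R) :
    Q *ᵥ u ⬝ᵥ w = u ⬝ᵥ Q *ᵥ w := by
  rw [dotProduct_mulVec, ← mulVec_transpose, hQ.eq]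

lemma IsSymm.mulVec_dotProduct_mulVec (hQ : Q.IsSymm) (hQQ : IsIdempotentElem Q) (u w : ι → R) :
    Q *ᵥ u ⬝ᵥ Q *ᵥ w = u ⬝ᵥ Q *ᵥ w := by
  rw [hQ.mulVec_dotProduct, mulVec_mulVec, hQQ.eq]

-- Pythagoras: `Q u` is orthogonal to `u - Q u`.
lemma IsSymm.mulVec_dotProduct_self_le [LinearOrder R] [IsStrictOrderedRing R]
    (hQ : Q.IsSymm) (hQQ : IsIdempotentElem Q) (u : ι → R) :
    Q *ᵥ u ⬝ᵥ Q *ᵥ u ≤ u ⬝ᵥ u := by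
  have hproj := hQ.mulVec_dotProduct_mulVec hQQ u u
  have hres : 0 ≤ (u - Q *ᵥ u) ⬝ᵥ (u - Q *ᵥ u) :=
    Finset.sum_nonneg fun i _ => mul_self_nonneg _
  simp only [sub_dotProduct, dotProduct_sub, dotProduct_comm (Q *ᵥ u) u] at hres
  linarith

end Matrix

section Indicator

variable {ι R : Type*} [Fintype ι] [DecidableEq ι] [CommRing R]

lemma indicator_dotProduct (K : Finset ι) (v : ι → R) :
    (fun i => if i ∈ K then 1 else 0) ⬝ᵥ v = ∑ i ∈ K, v i := by
  simp [dotProduct, Finset.sum_ite_mem]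

lemma indicator_dotProduct_self (K : Finset ι) :
    (fun i => if i ∈ K then (1 : R) else 0) ⬝ᵥ (fun i => if i ∈ K then 1 else 0) = K.card := by
  rw [indicator_dotProduct]
  simp +contextual

end Indicator

lemma Finset.sum_filter_nonpos_eq_sum_min {ι R : Type*} [Fintype ι] [AddCommMonoid R] [LinearOrder R]
    (v : ι → R) :
    ∑ i ∈ Finset.univ.filter (fun i => v i ≤ 0), v i = ∑ i, min (v i) 0 := by
  rw [Finset.sum_filter]
  exact Finset.sum_congr rfl fun i _ => (min_def (v i) 0).symm

lemma neg_lt_of_neg_div_sqrt_lt_div_sqrt {a c S N : ℝ} (hc : 0 ≤ c) (hS : 0 < S) (hSN : S ≤ N)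
    (h : -(c / √N) < a / √S) : -c < a := by
  have hN : 0 < √N := Real.sqrt_pos.mpr (hS.trans_le hSN)
  rw [lt_div_iff₀ (Real.sqrt_pos.mpr hS)] at h
  have : c / √N * √S ≤ c := by
    calc c / √N * √S ≤ c / √N * √N := by gcongr
      _ = c := div_mul_cancel₀ c hN.ne'
  linarith

theorem stmt_14_general (n : ℕ) (Q : Matrix (Fin n) (Fin n) ℝ)
    (hQsymm : Qᵀ = Q) (hQidem : Q * Q = Q)
    (y v z : Fin n → ℝ)
    (hy : ∀ i, 1 / (n : ℝ) ≤ y i)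
    (hv : v = Q.mulVec y) (hz : z = y - v)
    (hznotpos : ¬ (∀ i, 0 < z i))
    (K : Finset (Fin n)) (hK : K = Finset.univ.filter (fun k => v k ≤ 0))
    (qK : Fin n → ℝ)
    (hqK : qK = Q.mulVec (fun i => if i ∈ K then 1 else 0))
    (hqK0 : qK ≠ 0)
    (hstall : -(1 / (2 * (n : ℝ) * Real.sqrt n)) <
      (qK ⬝ᵥ v) / Real.sqrt (∑ i, qK i ^ 2)) :
    ∃ j, 1 / (n : ℝ) ≤ v j ∧ (-(∑ i, min (v i) 0)) / v j ≤ 1 / 2 := by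
  obtain ⟨j, hzj⟩ := not_forall.mp hznotpos
  have hnR : (0 : ℝ) < n := by exact_mod_cast j.pos
  have hvj : 1 / (n : ℝ) ≤ v j := (hy j).trans (by simp [hz] at hzj; linarith)
  have hmass : qK ⬝ᵥ v = ∑ i, min (v i) 0 := by
    rw [hqK, hv, IsSymm.mulVec_dotProduct_mulVec hQsymm hQidem, ← hv, indicator_dotProduct,
      hK, Finset.sum_filter_nonpos_eq_sum_min]
  have hsq : ∑ i, qK i ^ 2 = qK ⬝ᵥ qK := by simp [dotProduct, sq]
  have hnorm : qK ⬝ᵥ qK ≤ n := by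
    calc qK ⬝ᵥ qK ≤ (fun i => if i ∈ K then (1 : ℝ) else 0) ⬝ᵥ (fun i => if i ∈ K then 1 else 0) :=
          hqK ▸ IsSymm.mulVec_dotProduct_self_le hQsymm hQidem _
      _ = K.card := indicator_dotProduct_self K
      _ ≤ n := by exact_mod_cast card_finset_fin_le K
  have hpos : 0 < qK ⬝ᵥ qK := (Finset.sum_nonneg fun i _ => mul_self_nonneg (qK i)).lt_of_ne
    (Ne.symm (dotProduct_self_eq_zero.not.mpr hqK0))
  rw [hsq, hmass, ← div_div] at hstall
  have hlow := neg_lt_of_neg_div_sqrt_lt_div_sqrt (by positivity) hpos hnorm hstall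
  have hneg : ∑ i, min (v i) 0 ≤ 0 := Finset.sum_nonpos fun i _ => min_le_right _ _
  refine ⟨j, hvj, ?_⟩
  calc (-(∑ i, min (v i) 0)) / v j ≤ (1 / (2 * (n : ℝ))) / (1 / n) :=
        div_le_div₀ (by positivity) (by linarith) (by positivity) hvj
    _ = 1 / 2 := by field_simp

/-- The full cut lemma: if the basic procedure stalls
(`⟨q_K/‖q_K‖, v⟩ > -1/(2n^{3/2})` with `K = {k : v_k ≤ 0}`), then there is an
index `j` with `v_j ≥ 1/n` and `bound_j(y) = (-Σ_i min(v_i,0))/v_j ≤ 1/2`. -/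
theorem stmt_14 (n : ℕ) (hn : 1 ≤ n) (Q : Matrix (Fin n) (Fin n) ℝ)
    (hQsymm : Qᵀ = Q) (hQidem : Q * Q = Q)
    (y v z : Fin n → ℝ)
    (hy : ∀ i, 1 / (n : ℝ) ≤ y i)
    (hv : v = Q.mulVec y) (hz : z = y - v)
    (hznotpos : ¬ (∀ i, 0 < z i))
    (K : Finset (Fin n)) (hK : K = Finset.univ.filter (fun k => v k ≤ 0))
    (qK : Fin n → ℝ)
    (hqK : qK = Q.mulVec (fun i => if i ∈ K then 1 else 0))
    (hqK0 : qK ≠ 0)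
    (hstall : -(1 / (2 * (n : ℝ) * Real.sqrt n)) <
      (qK ⬝ᵥ v) / Real.sqrt (∑ i, qK i ^ 2)) :
    ∃ j, 1 / (n : ℝ) ≤ v j ∧ (-(∑ i, min (v i) 0)) / v j ≤ 1 / 2 :=
  stmt_14_general n Q hQsymm hQidem y v z hy hv hz hznotpos K hK qK hqK hqK0 hstall
end
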